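/- arXiv:2505.13647 — 6 statements merged into one kernel-verified Lean document; each statement's English description precedes it below -/
import Mathlib

section
/- Let R be a semiprime ring. Then the class of z°-ideals of R coincides with the class of right d-ideals of R if and only if r(l(RaR)) = P_a for every a ∈ R. -/
open TwoSidedIdeal

/-- Left annihilator of a set: `l(S) = {x | ∀ s ∈ S, x*s = 0}`. -/
def lAnn (R : Type*) [Ring R] (S : Set R) : Set R := {x | ∀ s ∈ S, x * s = 0}

/-- Right annihilator of a set: `r(S) = {x | ∀ s ∈ S, s*x = 0}`. -/
def rAnn (R : Type*) [Ring R] (S : Set R) : Set R := {x | ∀ s ∈ S, s * x = 0}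

/-- A ring is semiprime if `I² = 0` implies `I = 0` for every two-sided ideal `I`. -/
def IsSemiprimeRing (R : Type*) [Ring R] : Prop :=
  ∀ I : TwoSidedIdeal R, (∀ a ∈ I, ∀ b ∈ I, a * b = 0) → I = ⊥

/-- A two-sided ideal `P` is prime if it is proper and `IJ ⊆ P` implies `I ⊆ P` or `J ⊆ P`. -/
def IsPrimeTSI {R : Type*} [Ring R] (P : TwoSidedIdeal R) : Prop :=
  P ≠ ⊤ ∧ ∀ I J : TwoSidedIdeal R, (∀ a ∈ I, ∀ b ∈ J, a * b ∈ P) → I ≤ P ∨ J ≤ P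

/-- A minimal prime ideal: a prime two-sided ideal minimal among primes. -/
def IsMinPrime {R : Type*} [Ring R] (P : TwoSidedIdeal R) : Prop :=
  IsPrimeTSI P ∧ ∀ Q : TwoSidedIdeal R, IsPrimeTSI Q → Q ≤ P → Q = P

/-- `Pmin R B` is the intersection of all minimal prime ideals of `R` containing the set `B`
(equal to all of `R` if there are none). -/
def Pmin (R : Type*) [Ring R] (B : Set R) : Set R :=
  ⋂ P ∈ {P : TwoSidedIdeal R | IsMinPrime P ∧ B ⊆ (P : Set R)}, (P : Set R)

/-- `Pa a` : the intersection of all minimal prime ideals containing `a`. -/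
def Pa {R : Type*} [Ring R] (a : R) : Set R := Pmin R {a}

/-- An ideal `I` is a z°-ideal if `P_a ⊆ I` for every `a ∈ I`. -/
def IsZoIdeal {R : Type*} [Ring R] (I : TwoSidedIdeal R) : Prop :=
  ∀ a ∈ I, Pa a ⊆ (I : Set R)

/-- An ideal `I` is a right d-ideal if `r(l(RaR)) ⊆ I` for every `a ∈ I`. -/
def IsRightDIdeal {R : Type*} [Ring R] (I : TwoSidedIdeal R) : Prop :=
  ∀ a ∈ I, rAnn R (lAnn R (span {a} : Set R)) ⊆ (I : Set R)

/-- An ideal `I` is a right annihilator ideal if `I = r(l(I))`. -/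
def IsRightAnnIdeal {R : Type*} [Ring R] (I : TwoSidedIdeal R) : Prop :=
  (I : Set R) = rAnn R (lAnn R (I : Set R))

section Aux
variable {R : Type*} [Ring R]

lemma rAnn_anti {S T : Set R} (h : S ⊆ T) : rAnn R T ⊆ rAnn R S :=
  fun _ hx s hs => hx s (h hs)

lemma subset_lAnn_rAnn (S : Set R) : S ⊆ lAnn R (rAnn R S) :=
  fun s hs x hx => hx s hs

lemma mem_Pa {x a : R} : x ∈ Pa a ↔ ∀ P : TwoSidedIdeal R, IsMinPrime P → a ∈ P → x ∈ P := by
  simp [Pa, Pmin, Set.singleton_subset_iff]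

lemma self_mem_Pa (a : R) : a ∈ Pa a := mem_Pa.mpr fun _ _ h => h

/-- The two-sided ideal with carrier `r(l(RaR))`. -/
def rlIdeal (a : R) : TwoSidedIdeal R :=
  mk' (rAnn R (lAnn R (span {a} : Set R)))
    (fun t _ => mul_zero t)
    (fun {x y} hx hy t ht => by rw [mul_add, hx t ht, hy t ht, add_zero])
    (fun {x} hx t ht => by rw [mul_neg, hx t ht, neg_zero])
    (fun {x y} hy t ht => by
      have htx : t * x ∈ lAnn R (span {a} : Set R) := fun s hs => by
        rw [mul_assoc]; exact ht _ (mul_mem_left _ x s hs)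
      rw [← mul_assoc]; exact hy _ htx)
    (fun {x y} hx t ht => by rw [← mul_assoc, hx t ht, zero_mul])

lemma coe_rlIdeal (a : R) : (rlIdeal a : Set R) = rAnn R (lAnn R (span {a} : Set R)) :=
  coe_mk' _ _ _ _ _ _

lemma self_mem_rlIdeal (a : R) : a ∈ rlIdeal a := by
  rw [← SetLike.mem_coe, coe_rlIdeal]
  exact fun t ht => ht a (subset_span rfl)

lemma isRightDIdeal_rlIdeal (a : R) : IsRightDIdeal (rlIdeal a) := by
  intro b hb
  rw [coe_rlIdeal]
  have h1 : (span {b} : Set R) ⊆ rAnn R (lAnn R (span {a} : Set R)) := by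
    rw [← coe_rlIdeal]
    intro x hx
    rw [SetLike.mem_coe] at hx ⊢
    exact mem_span_iff.mp hx (rlIdeal a) (Set.singleton_subset_iff.mpr hb)
  have h2 : lAnn R (span {a} : Set R) ⊆ lAnn R (span {b} : Set R) := by
    intro x hx s hs
    exact subset_lAnn_rAnn (lAnn R (span {a} : Set R)) hx s (h1 hs)
  exact rAnn_anti h2

/-- The two-sided ideal with carrier `Pa a`. -/
def PaIdeal (a : R) : TwoSidedIdeal R :=
  sInf {P : TwoSidedIdeal R | IsMinPrime P ∧ a ∈ P}

lemma coe_PaIdeal (a : R) : (PaIdeal a : Set R) = Pa a := by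
  ext x
  rw [SetLike.mem_coe, PaIdeal, mem_sInf, mem_Pa]
  exact ⟨fun h P hP ha => h P ⟨hP, ha⟩, fun h P hP => h P hP.1 hP.2⟩

lemma self_mem_PaIdeal (a : R) : a ∈ PaIdeal a := by
  rw [← SetLike.mem_coe, coe_PaIdeal]; exact self_mem_Pa a

lemma isZoIdeal_PaIdeal (a : R) : IsZoIdeal (PaIdeal a) := by
  intro b hb x hx
  rw [coe_PaIdeal]
  rw [← SetLike.mem_coe, coe_PaIdeal, mem_Pa] at hb
  exact mem_Pa.mpr fun P hP ha => mem_Pa.mp hx P hP (hb P hP ha)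

end Aux


/-- Corollary 3.3: in a semiprime ring, the classes of z°-ideals and right d-ideals
coincide iff `r(l(RaR)) = P_a` for every `a`. -/
theorem stmt1 (R : Type*) [Ring R] (hR : IsSemiprimeRing R) :
    (∀ I : TwoSidedIdeal R, IsZoIdeal I ↔ IsRightDIdeal I) ↔
      ∀ a : R, rAnn R (lAnn R (span {a} : Set R)) = Pa a := by
  constructor
  · intro h a
    apply subset_antisymm
    · have := ((h (PaIdeal a)).mp (isZoIdeal_PaIdeal a)) a (self_mem_PaIdeal a)
      rwa [coe_PaIdeal] at this
    · have := ((h (rlIdeal a)).mpr (isRightDIdeal_rlIdeal a)) a (self_mem_rlIdeal a)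
      rwa [coe_rlIdeal] at this
  · intro h I
    simp only [IsZoIdeal, IsRightDIdeal, h]
end

section
/- Let R be a semiprime ring, let I be a right ideal of R, and let a ∈ R be such that l(I) ⊆ l({a}). Then for each y ∈ R, l(Iy) ⊆ l({ay}), where Iy = {xy : x ∈ I}. -/
open TwoSidedIdeal

/-- In a semiprime ring, `x R x = 0` implies `x = 0`. -/
theorem semiprime_eq_zero_of_mul_self {R : Type*} [Ring R] (hR : IsSemiprimeRing R)
    (x : R) (h : ∀ r : R, x * r * x = 0) : x = 0 := by
  have hx1 : ∀ b ∈ TwoSidedIdeal.span {x}, ∀ r : R, x * r * b = 0 := by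
    intro b hb r
    have hJ : b ∈ TwoSidedIdeal.mk' {y : R | ∀ r : R, x * r * y = 0}
        (by intro r; simp)
        (fun {p q} hp hq r => by rw [mul_add, hp r, hq r, add_zero])
        (fun {p} hp r => by rw [← neg_zero, ← hp r]; noncomm_ring)
        (fun {p q} hq r => by
          have := hq (r * p); rw [← this]; noncomm_ring)
        (fun {p q} hp r => by
          have := hp r; rw [show x * r * (p * q) = (x * r * p) * q by noncomm_ring, this,
            zero_mul]) := by
      refine TwoSidedIdeal.mem_span_iff.mp hb _ ?_
      intro z hz
      rw [Set.mem_singleton_iff] at hz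
      subst hz
      simp only [SetLike.mem_coe, TwoSidedIdeal.mem_mk']
      exact h
    rw [TwoSidedIdeal.mem_mk'] at hJ
    exact hJ r
  have hx2 : ∀ a ∈ TwoSidedIdeal.span {x}, ∀ b ∈ TwoSidedIdeal.span {x}, a * b = 0 := by
    intro a ha
    have hJ : a ∈ TwoSidedIdeal.mk'
        {y : R | ∀ b ∈ TwoSidedIdeal.span ({x} : Set R), y * b = 0}
        (by intro b hb; simp)
        (fun {p q} hp hq b hb => by rw [add_mul, hp b hb, hq b hb, add_zero])
        (fun {p} hp b hb => by rw [neg_mul, hp b hb, neg_zero])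
        (fun {p q} hq b hb => by rw [mul_assoc, hq b hb, mul_zero])
        (fun {p q} hp b hb => by
          rw [mul_assoc]
          exact hp _ ((TwoSidedIdeal.span {x}).mul_mem_left q b hb)) := by
      refine TwoSidedIdeal.mem_span_iff.mp ha _ ?_
      intro z hz
      rw [Set.mem_singleton_iff] at hz
      subst hz
      simp only [SetLike.mem_coe, TwoSidedIdeal.mem_mk']
      intro b hb
      have := hx1 b hb 1
      rwa [mul_one] at this
    rw [TwoSidedIdeal.mem_mk'] at hJ
    exact hJ
  have hspan : TwoSidedIdeal.span {x} = ⊥ := hR _ hx2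
  have hx : x ∈ TwoSidedIdeal.span ({x} : Set R) := TwoSidedIdeal.subset_span rfl
  rw [hspan] at hx
  simpa using hx

/-- Lemma 3.5: in a semiprime ring, if `I` is a right ideal, `a ∈ R` and `l(I) ⊆ l(a)`,
then `l(Iy) ⊆ l(ay)` for each `y ∈ R`. -/
theorem stmt4 (R : Type*) [Ring R] (hR : IsSemiprimeRing R) (I : Set R)
    (h0 : (0 : R) ∈ I) (hadd : ∀ x ∈ I, ∀ y ∈ I, x + y ∈ I) (hneg : ∀ x ∈ I, -x ∈ I)
    (hmulr : ∀ x ∈ I, ∀ r : R, x * r ∈ I)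
    (a : R) (ha : lAnn R I ⊆ lAnn R {a}) :
    ∀ y : R, lAnn R ((fun x => x * y) '' I) ⊆ lAnn R {a * y} := by
  intro y t ht s hs
  rw [Set.mem_singleton_iff] at hs
  subst hs
  have htI : ∀ i ∈ I, t * (i * y) = 0 := fun i hi => ht _ ⟨i, hi, rfl⟩
  -- Step 1: for every r, `y * r * t` annihilates `I` on the left
  have step1 : ∀ r : R, ∀ i ∈ I, y * r * t * i = 0 := by
    intro r i hi
    apply semiprime_eq_zero_of_mul_self hR
    intro s
    have h1 : t * (i * s * y) = 0 := by
      exact htI _ (hmulr i hi s)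
    calc y * r * t * i * s * (y * r * t * i)
        = (y * r) * (t * (i * s * y)) * (r * t * i) := by simp only [mul_assoc]
      _ = 0 := by rw [h1, mul_zero, zero_mul]
  -- Step 2: hence `y * r * t * a = 0` for every r
  have step2 : ∀ r : R, y * r * t * a = 0 := by
    intro r
    have hmem : y * r * t ∈ lAnn R I := fun i hi => step1 r i hi
    exact ha hmem a rfl
  -- Step 3: conclude by semiprimality
  apply semiprime_eq_zero_of_mul_self hR
  intro r
  calc t * (a * y) * r * (t * (a * y))
      = (t * a) * ((y * r * t * a) * y) := by simp only [mul_assoc]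
    _ = 0 := by rw [step2 r, zero_mul, mul_zero]
end

section
/- Let R be a ring, n a positive integer, and A = [a_{ij}] an n-by-n matrix over R, regarded as an element of the full matrix ring M_n(R). Let B = {a_{ij} : 1 ≤ i, j ≤ n} be the set of entries of A. Then P_A = M_n(P_B), i.e., the intersection of all minimal prime ideals of M_n(R) containing A equals the set of n-by-n matrices all of whose entries lie in the intersection P_B of all minimal prime ideals of R containing B. -/
open TwoSidedIdeal

/-!
Two-sided ideals of `Mₙ(R)` are exactly the `Mₙ(I)` (`TwoSidedIdeal.orderIsoMatrix`), and a product
condition `I₁ I₂ ⊆ I` holds in `R` iff `Mₙ(I₁) Mₙ(I₂) ⊆ Mₙ(I)`. Hence primeness and minimality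
transfer along `I ↦ Mₙ(I)`, and the minimal primes of `Mₙ(R)` containing a set `F` of matrices are
the `Mₙ(P)` with `P` a minimal prime of `R` containing every entry of every matrix in `F`.
-/

namespace TwoSidedIdeal

variable {R : Type*} [Ring R] {n : Type*} [Fintype n]

theorem subset_matrix_iff {F : Set (Matrix n n R)} {I : TwoSidedIdeal R} :
    F ⊆ I.matrix n ↔ (⋃ M ∈ F, Set.range fun p : n × n => M p.1 p.2) ⊆ I := by
  simp only [Set.iUnion₂_subset_iff, Set.range_subset_iff, Prod.forall]
  exact forall₂_congr fun M _ => mem_matrix n I M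

variable [DecidableEq n] [Nonempty n]

theorem matrix_injective : Function.Injective (matrix (R := R) n) :=
  equivMatrix.injective

theorem matrix_le_matrix_iff {I J : TwoSidedIdeal R} : I.matrix n ≤ J.matrix n ↔ I ≤ J :=
  orderIsoMatrix.le_iff_le

theorem forall_matrix {p : TwoSidedIdeal (Matrix n n R) → Prop} :
    (∀ J, p J) ↔ ∀ I : TwoSidedIdeal R, p (I.matrix n) :=
  equivMatrix.surjective.forall

theorem matrix_ne_top_iff {I : TwoSidedIdeal R} : I.matrix n ≠ ⊤ ↔ I ≠ ⊤ := by
  rw [← matrix_top n, matrix_injective.ne_iff]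

theorem matrix_mul_mem_iff {I J K : TwoSidedIdeal R} :
    (∀ M ∈ I.matrix n, ∀ N ∈ J.matrix n, M * N ∈ K.matrix n) ↔
      ∀ a ∈ I, ∀ b ∈ J, a * b ∈ K := by
  constructor
  · intro h a ha b hb
    obtain ⟨i⟩ := ‹Nonempty n›
    have hab := (mem_matrix _ _ _).1 <| h (Matrix.single i i a)
      (by simp [Matrix.single_apply, ha, apply_ite]) (Matrix.single i i b)
      (by simp [Matrix.single_apply, hb, apply_ite])
    simpa using hab i i
  · intro h M hM N hN i j
    rw [Matrix.mul_apply]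
    exact K.finsetSum_mem _ _ fun k _ => h _ (hM i k) _ (hN k j)

theorem isPrimeTSI_matrix_iff {I : TwoSidedIdeal R} :
    IsPrimeTSI (I.matrix n) ↔ IsPrimeTSI I := by
  unfold IsPrimeTSI
  simp only [matrix_ne_top_iff, forall_matrix (p := fun J => ∀ _, _), matrix_mul_mem_iff,
    matrix_le_matrix_iff]

theorem isMinPrime_matrix_iff {I : TwoSidedIdeal R} :
    IsMinPrime (I.matrix n) ↔ IsMinPrime I := by
  unfold IsMinPrime
  simp only [isPrimeTSI_matrix_iff, forall_matrix (p := fun J => _), matrix_le_matrix_iff,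
    matrix_injective.eq_iff]

end TwoSidedIdeal

open TwoSidedIdeal in
theorem pmin_matrix {R : Type*} [Ring R] {n : Type*} [Fintype n] [DecidableEq n] [Nonempty n]
    (F : Set (Matrix n n R)) :
    Pmin (Matrix n n R) F =
      {M | ∀ i j, M i j ∈ Pmin R (⋃ N ∈ F, Set.range fun p : n × n => N p.1 p.2)} := by
  ext M
  simp only [Pmin, Set.mem_ofPred_eq, Set.mem_iInter₂, forall_matrix (p := fun J => _ → _),
    isMinPrime_matrix_iff, subset_matrix_iff, SetLike.mem_coe, mem_matrix]
  exact ⟨fun h i j I hI => h I hI i j, fun h I hI i j => h i j I hI⟩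

/-- Lemma 4.1: for `A ∈ Mₙ(R)`, `P_A = Mₙ(P_B)` where `B` is the set of entries of `A`. -/
theorem stmt6 (R : Type*) [Ring R] (n : ℕ) (hn : 0 < n)
    (A : Matrix (Fin n) (Fin n) R) :
    Pa (R := Matrix (Fin n) (Fin n) R) A =
      {M : Matrix (Fin n) (Fin n) R |
        ∀ i j, M i j ∈ Pmin R (Set.range fun p : Fin n × Fin n => A p.1 p.2)} := by
  have : Nonempty (Fin n) := ⟨⟨0, hn⟩⟩
  rw [Pa, pmin_matrix, Set.biUnion_singleton]
end

section
/- Let R be a ring, n a positive integer, and T_n(R) the ring of n-by-n upper triangular matrices over R. Let J_{ij} (1 ≤ i ≤ j ≤ n) be ideals of R satisfying J_{ik} ⊆ J_{i,k+1} and J_{i+1,k} ⊆ J_{ik} (whenever the indices make sense), and let I be the ideal of T_n(R) consisting of all upper triangular matrices whose (i,j) entry lies in J_{ij} for all i ≤ j. Then I is a z°-ideal of T_n(R) if and only if each diagonal ideal J_{ii} (1 ≤ i ≤ n) is a z°-ideal of R and J_{ij} = R for all j > i. -/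
open TwoSidedIdeal

/-- The ring `Tₙ(R)` of upper triangular `n × n` matrices over `R`, as a subring of the
full matrix ring. -/
def upperTriangularSubring (n : ℕ) (R : Type*) [Ring R] :
    Subring (Matrix (Fin n) (Fin n) R) where
  carrier := {M | ∀ i j : Fin n, j < i → M i j = 0}
  zero_mem' := fun _ _ _ => rfl
  one_mem' := fun _ _ hij => Matrix.one_apply_ne (ne_of_gt hij)
  add_mem' := fun ha hb i j hij => by
    rw [Matrix.add_apply, ha i j hij, hb i j hij, add_zero]
  neg_mem' := fun ha i j hij => by rw [Matrix.neg_apply, ha i j hij, neg_zero]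
  mul_mem' := fun {a b} ha hb i j hij => by
    rw [Matrix.mul_apply]
    apply Finset.sum_eq_zero
    intro k _
    rcases lt_or_ge k i with h | h
    · rw [ha i k h, zero_mul]
    · rw [hb k j (lt_of_lt_of_le hij h), mul_zero]

/-!
Every prime ideal of `Tₙ(R)` contains the nilpotent ideal of strictly upper triangular
matrices, the kernel of the diagonal map `Tₙ(R) → Rⁿ`, and every prime ideal of a finite product
of rings is the preimage of a prime ideal of one factor. Hence the minimal primes of `Tₙ(R)` are
the ideals `{M | M k k ∈ Q}` with `Q` a minimal prime of `R`, so `X ∈ P_M` iff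
`X k k ∈ P_(M k k)` for all `k`. Testing the z°-condition on single-entry matrices gives both
implications; in particular every `E i j` with `i < j` lies in `P_0`, which forces `J i j = R`.
-/
namespace TwoSidedIdeal

variable {A B : Type*} [Ring A] [Ring B] {f : A →+* B}

theorem mem_map_of_surjective (hf : Function.Surjective f) {I : TwoSidedIdeal A} {b : B} :
    b ∈ I.map f ↔ ∃ a ∈ I, f a = b := by
  refine ⟨fun hb => ?_, fun ⟨a, ha, hab⟩ => subset_span ⟨a, ha, hab⟩⟩
  let image : TwoSidedIdeal B := .mk' {b | ∃ a ∈ I, f a = b} ⟨0, I.zero_mem, map_zero f⟩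
    (fun ⟨a, ha, hab⟩ ⟨a', ha', hab'⟩ =>
      ⟨a + a', I.add_mem ha ha', by rw [map_add, hab, hab']⟩)
    (fun ⟨a, ha, hab⟩ => ⟨-a, I.neg_mem ha, by rw [map_neg, hab]⟩)
    (fun {x _} ⟨a, ha, hab⟩ => by
      obtain ⟨y, rfl⟩ := hf x
      exact ⟨y * a, I.mul_mem_left _ _ ha, by rw [map_mul, hab]⟩)
    (fun {_ x} ⟨a, ha, hab⟩ => by
      obtain ⟨y, rfl⟩ := hf x
      exact ⟨a * y, I.mul_mem_right _ _ ha, by rw [map_mul, hab]⟩)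
  have hle : I.map f ≤ image :=
    span_le.2 fun _ ⟨a, ha, hab⟩ => (mem_mk' _ _ _ _ _ _ _).2 ⟨a, ha, hab⟩
  simpa [image] using hle hb

theorem comap_le_comap_iff_of_surjective (hf : Function.Surjective f) {Q Q' : TwoSidedIdeal B} :
    Q.comap f ≤ Q'.comap f ↔ Q ≤ Q' := by
  refine ⟨fun h b hb => ?_, comap_le_comap f⟩
  obtain ⟨a, rfl⟩ := hf b
  exact (mem_comap f).1 (h ((mem_comap f).2 hb))

theorem comap_map_of_surjective (hf : Function.Surjective f) {P : TwoSidedIdeal A}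
    (hker : ker f ≤ P) : (P.map f).comap f = P := by
  ext a
  rw [mem_comap, mem_map_of_surjective hf]
  refine ⟨fun ⟨p, hp, hpa⟩ => ?_, fun ha => ⟨a, ha, rfl⟩⟩
  have hdiff : a - p ∈ P := hker (by rw [mem_ker, map_sub, hpa, sub_self])
  simpa using P.add_mem hdiff hp

end TwoSidedIdeal

section Comap

variable {A B : Type*} [Ring A] [Ring B] {f : A →+* B}

theorem mem_Pa_iff {a x : A} :
    x ∈ Pa a ↔ ∀ P : TwoSidedIdeal A, IsMinPrime P → a ∈ P → x ∈ P := by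
  simp [Pa, Pmin]

theorem zero_mem_Pa (a : A) : (0 : A) ∈ Pa a :=
  mem_Pa_iff.2 fun P _ _ => P.zero_mem

theorem isPrimeTSI_comap_iff (hf : Function.Surjective f) {Q : TwoSidedIdeal B} :
    IsPrimeTSI (Q.comap f) ↔ IsPrimeTSI Q := by
  constructor
  · rintro ⟨hne, hprime⟩
    refine ⟨fun hQ => hne (eq_top_iff.2 fun a _ => by simp [mem_comap, hQ]), fun I J hIJ => ?_⟩
    have hIJ' : ∀ a ∈ I.comap f, ∀ b ∈ J.comap f, a * b ∈ Q.comap f := fun a ha b hb =>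
      (mem_comap f).2 (by rw [map_mul]; exact hIJ _ ((mem_comap f).1 ha) _ ((mem_comap f).1 hb))
    simpa only [comap_le_comap_iff_of_surjective hf] using hprime _ _ hIJ'
  · rintro ⟨hne, hprime⟩
    refine ⟨fun hQ => hne (eq_top _ ?_), fun I J hIJ => ?_⟩
    · simpa [mem_comap] using (hQ ▸ mem_top _ : (1 : A) ∈ Q.comap f)
    have hIJ' : ∀ a ∈ I.map f, ∀ b ∈ J.map f, a * b ∈ Q := by
      intro _ hx _ hy
      obtain ⟨a, ha, rfl⟩ := (mem_map_of_surjective hf).1 hx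
      obtain ⟨b, hb, rfl⟩ := (mem_map_of_surjective hf).1 hy
      rw [← map_mul]
      exact (mem_comap f).1 (hIJ a ha b hb)
    refine (hprime _ _ hIJ').imp ?_ ?_ <;>
      exact fun h a ha => (mem_comap f).2 (h ((mem_map_of_surjective hf).2 ⟨a, ha, rfl⟩))

theorem IsMinPrime.of_comap (hf : Function.Surjective f) {Q : TwoSidedIdeal B}
    (hQ : IsMinPrime (Q.comap f)) : IsMinPrime Q := by
  refine ⟨(isPrimeTSI_comap_iff hf).1 hQ.1, fun Q' hQ' hle => ?_⟩
  have := hQ.2 _ ((isPrimeTSI_comap_iff hf).2 hQ') ((comap_le_comap_iff_of_surjective hf).2 hle)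
  exact le_antisymm hle ((comap_le_comap_iff_of_surjective hf).1 this.ge)

theorem IsMinPrime.comap (hf : Function.Surjective f) {Q : TwoSidedIdeal B} (hQ : IsMinPrime Q)
    (hker : ∀ P, IsPrimeTSI P → P ≤ Q.comap f → ker f ≤ P) : IsMinPrime (Q.comap f) := by
  refine ⟨(isPrimeTSI_comap_iff hf).2 hQ.1, fun P hP hle => ?_⟩
  have hPeq := comap_map_of_surjective hf (hker P hP hle)
  rw [← hPeq] at hP hle ⊢
  rw [hQ.2 _ ((isPrimeTSI_comap_iff hf).1 hP) ((comap_le_comap_iff_of_surjective hf).1 hle)]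

theorem IsMinPrime.exists_eq_comap (hf : Function.Surjective f) {P : TwoSidedIdeal A}
    (hP : IsMinPrime P) (hker : ker f ≤ P) : ∃ Q, IsMinPrime Q ∧ P = Q.comap f := by
  rw [← comap_map_of_surjective hf hker] at hP ⊢
  exact ⟨_, hP.of_comap hf, rfl⟩

theorem mem_Pa_iff_of_surjective (hf : Function.Surjective f)
    (hker : ∀ P : TwoSidedIdeal A, IsPrimeTSI P → ker f ≤ P) {a x : A} :
    x ∈ Pa a ↔ f x ∈ Pa (f a) := by
  simp only [mem_Pa_iff]
  constructor
  · intro hx Q hQ ha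
    exact (mem_comap f).1 (hx _ (hQ.comap hf fun P hP _ => hker P hP) ((mem_comap f).2 ha))
  · intro hx P hP ha
    obtain ⟨Q, hQ, rfl⟩ := hP.exists_eq_comap hf (hker P hP.1)
    exact (mem_comap f).2 (hx Q hQ ((mem_comap f).1 ha))

end Comap

theorem IsPrimeTSI.le_of_nilpotent_filtration {A : Type*} [Ring A] {P : TwoSidedIdeal A}
    (hP : IsPrimeTSI P) (N : ℕ → TwoSidedIdeal A)
    (hmul : ∀ s t, ∀ a ∈ N s, ∀ b ∈ N t, a * b ∈ N (s + t))
    {m : ℕ} (hm : ∀ k, m ≤ k → N k = ⊥) {k : ℕ} (hk : 0 < k) : N k ≤ P := by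
  suffices ∀ d k, 0 < k → m ≤ k + d → N k ≤ P from this m k hk (by omega)
  intro d
  induction d with
  | zero => intro k _ hmk; simp [hm k (by omega)]
  | succ d ih =>
    intro k hk hmk
    have hsq : N (k + k) ≤ P := ih (k + k) (by omega) (by omega)
    exact (hP.2 _ _ fun a ha b hb => hsq (hmul k k a ha b hb)).elim id id

section Pi

variable {ι : Type*} {R : ι → Type*} [∀ i, Ring (R i)]

theorem IsPrimeTSI.exists_ker_evalRingHom_le [Finite ι] {P : TwoSidedIdeal (∀ i, R i)}
    (hP : IsPrimeTSI P) : ∃ k, ker (Pi.evalRingHom R k) ≤ P := by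
  classical
  have := Fintype.ofFinite ι
  by_contra! h
  -- `Pi.single k 1` annihilates `ker (eval k)`, so primality puts it in `P`; then `1 ∈ P`.
  have hsingle : ∀ k, Pi.single k 1 ∈ P := by
    intro k
    let S : TwoSidedIdeal (∀ i, R i) := ⨅ l : {l // l ≠ k}, ker (Pi.evalRingHom R l)
    have hS : Pi.single k 1 ∈ S :=
      (mem_iInf _).2 fun l => (mem_ker _).2 (Pi.single_eq_of_ne l.2 _)
    refine ((hP.2 _ S fun a ha b hb => ?_).resolve_left (h k)) hS
    have : a * b = 0 := by
      ext l
      rw [Pi.mul_apply, Pi.zero_apply]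
      by_cases hl : l = k
      · rw [hl, show a k = 0 from (mem_ker _).1 ha, zero_mul]
      · rw [show b l = 0 from (mem_ker _).1 ((mem_iInf _).1 hb ⟨l, hl⟩), mul_zero]
    exact this ▸ P.zero_mem
  apply hP.1 (eq_top _ _)
  rw [← Finset.univ_sum_single (1 : ∀ i, R i)]
  exact P.finsetSum_mem _ _ fun k _ => hsingle k

theorem eq_of_ker_evalRingHom_le_comap {k l : ι} {Q : TwoSidedIdeal (R k)} (hQ : Q ≠ ⊤)
    (h : ker (Pi.evalRingHom R l) ≤ Q.comap (Pi.evalRingHom R k)) : l = k := by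
  classical
  by_contra hlk
  refine hQ (eq_top _ ?_)
  have hsingle : Pi.single k 1 ∈ ker (Pi.evalRingHom R l) :=
    (mem_ker _).2 (Pi.single_eq_of_ne hlk (1 : R k))
  simpa [mem_comap] using h hsingle

theorem mem_Pa_pi_iff [Finite ι] {a x : ∀ i, R i} : x ∈ Pa a ↔ ∀ k, x k ∈ Pa (a k) := by
  simp only [mem_Pa_iff]
  have hsurj : ∀ k, Function.Surjective (Pi.evalRingHom R k) := Function.surjective_eval
  constructor
  · intro hx k Q hQ hak
    have hmin : IsMinPrime (Q.comap (Pi.evalRingHom R k)) := hQ.comap (hsurj k) fun P hP hle => by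
      obtain ⟨l, hl⟩ := hP.exists_ker_evalRingHom_le
      rwa [← eq_of_ker_evalRingHom_le_comap hQ.1.1 (hl.trans hle)]
    exact (mem_comap _).1 (hx _ hmin ((mem_comap _).2 hak))
  · intro hx P hP ha
    obtain ⟨k, hk⟩ := hP.1.exists_ker_evalRingHom_le
    obtain ⟨Q, hQ, rfl⟩ := hP.exists_eq_comap (hsurj k) hk
    exact (mem_comap _).2 (hx k Q hQ ((mem_comap _).1 ha))

end Pi

theorem Matrix.mul_apply_eq_zero_of_superdiag {n : ℕ} {R : Type*} [Ring R]
    {A B : Matrix (Fin n) (Fin n) R} {s t : ℕ}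
    (hA : ∀ i j : Fin n, (j : ℕ) < i + s → A i j = 0)
    (hB : ∀ i j : Fin n, (j : ℕ) < i + t → B i j = 0)
    (i j : Fin n) (hij : (j : ℕ) < i + (s + t)) : (A * B) i j = 0 := by
  rw [Matrix.mul_apply]
  refine Finset.sum_eq_zero fun l _ => ?_
  rcases lt_or_ge (l : ℕ) (i + s) with h | h
  · rw [hA i l h, zero_mul]
  · rw [hB l j (by omega), mul_zero]

namespace upperTriangularSubring

variable {n : ℕ} {R : Type*} [Ring R]

theorem apply_eq_zero_of_lt (M : upperTriangularSubring n R) {i j : Fin n} (h : (j : ℕ) < i) :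
    (M : Matrix (Fin n) (Fin n) R) i j = 0 :=
  M.2 i j h

theorem diag_mul (A B : upperTriangularSubring n R) (k : Fin n) :
    ((A * B : upperTriangularSubring n R) : Matrix (Fin n) (Fin n) R) k k =
      (A : Matrix (Fin n) (Fin n) R) k k * (B : Matrix (Fin n) (Fin n) R) k k := by
  rw [Subring.coe_mul, Matrix.mul_apply]
  refine Finset.sum_eq_single k (fun l _ hl => ?_) (by simp)
  rcases hl.lt_or_gt with h | h
  · rw [apply_eq_zero_of_lt A h, zero_mul]
  · rw [apply_eq_zero_of_lt B h, mul_zero]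

variable (n R) in
def diagRingHom : upperTriangularSubring n R →+* (Fin n → R) where
  toFun M k := (M : Matrix (Fin n) (Fin n) R) k k
  map_one' := funext fun k => Matrix.one_apply_eq k
  map_mul' A B := funext (diag_mul A B)
  map_zero' := rfl
  map_add' _ _ := rfl

theorem diagRingHom_surjective : Function.Surjective (diagRingHom n R) := fun d =>
  ⟨⟨Matrix.diagonal d, fun _ _ h => Matrix.diagonal_apply_ne d h.ne'⟩,
    funext fun k => Matrix.diagonal_apply_eq d k⟩

variable (n R) in
def superdiagIdeal (k : ℕ) : TwoSidedIdeal (upperTriangularSubring n R) := .mk'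
  {M | ∀ i j : Fin n, (j : ℕ) < i + k → (M : Matrix (Fin n) (Fin n) R) i j = 0}
  (fun _ _ _ => rfl)
  (fun hA hB i j h => by simp [hA i j h, hB i j h])
  (fun hA i j h => by simp [hA i j h])
  (fun {A _} hB i j h => Matrix.mul_apply_eq_zero_of_superdiag (s := 0)
    (fun _ _ h' => apply_eq_zero_of_lt A (by omega)) hB i j (by omega))
  (fun {_ B} hA i j h => Matrix.mul_apply_eq_zero_of_superdiag (t := 0) hA
    (fun _ _ h' => apply_eq_zero_of_lt B (by omega)) i j (by omega))

theorem mem_superdiagIdeal {k : ℕ} {M : upperTriangularSubring n R} :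
    M ∈ superdiagIdeal n R k ↔
      ∀ i j : Fin n, (j : ℕ) < i + k → (M : Matrix (Fin n) (Fin n) R) i j = 0 :=
  mem_mk' _ _ _ _ _ _ _

theorem mul_mem_superdiagIdeal {s t : ℕ} {A B : upperTriangularSubring n R}
    (hA : A ∈ superdiagIdeal n R s) (hB : B ∈ superdiagIdeal n R t) :
    A * B ∈ superdiagIdeal n R (s + t) :=
  mem_superdiagIdeal.2 <|
    Matrix.mul_apply_eq_zero_of_superdiag (mem_superdiagIdeal.1 hA) (mem_superdiagIdeal.1 hB)

theorem superdiagIdeal_eq_bot {k : ℕ} (hk : n ≤ k) : superdiagIdeal n R k = ⊥ :=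
  eq_bot_iff.2 fun M hM => (mem_bot _).2 <| Subtype.ext <| Matrix.ext fun i j =>
    mem_superdiagIdeal.1 hM i j (by omega)

theorem ker_diagRingHom_le_superdiagIdeal_one :
    ker (diagRingHom n R) ≤ superdiagIdeal n R 1 := by
  intro M hM
  refine mem_superdiagIdeal.2 fun i j h => ?_
  rcases (show (j : ℕ) < i ∨ (j : ℕ) = i by omega) with h | h
  · exact apply_eq_zero_of_lt M h
  · obtain rfl : j = i := Fin.ext h
    exact congrFun ((mem_ker _).1 hM) j

theorem _root_.IsPrimeTSI.ker_diagRingHom_le {P : TwoSidedIdeal (upperTriangularSubring n R)}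
    (hP : IsPrimeTSI P) : ker (diagRingHom n R) ≤ P :=
  ker_diagRingHom_le_superdiagIdeal_one.trans <|
    hP.le_of_nilpotent_filtration (superdiagIdeal n R)
      (fun _ _ _ ha _ hb => mul_mem_superdiagIdeal ha hb) (fun _ => superdiagIdeal_eq_bot) one_pos

theorem mem_Pa_iff_diag {M X : upperTriangularSubring n R} :
    X ∈ Pa M ↔
      ∀ k, (X : Matrix (Fin n) (Fin n) R) k k ∈ Pa ((M : Matrix (Fin n) (Fin n) R) k k) :=
  (mem_Pa_iff_of_surjective (diagRingHom_surjective (n := n) (R := R))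
    fun _ hP => hP.ker_diagRingHom_le).trans mem_Pa_pi_iff

def single (i j : Fin n) (hij : i ≤ j) (r : R) : upperTriangularSubring n R :=
  ⟨Matrix.single i j r, fun _ _ h =>
    Matrix.single_apply_of_ne _ _ _ _ _ fun ⟨hi, hj⟩ => (hi ▸ hj ▸ h).not_ge hij⟩

@[simp]
theorem coe_single (i j : Fin n) (hij : i ≤ j) (r : R) :
    (single i j hij r : Matrix (Fin n) (Fin n) R) = Matrix.single i j r :=
  rfl

end upperTriangularSubring

open upperTriangularSubring

theorem stmt8_general (R : Type*) [Ring R] (n : ℕ)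
    (J : Fin n → Fin n → TwoSidedIdeal R)
    (I : TwoSidedIdeal (upperTriangularSubring n R))
    (hI : (I : Set (upperTriangularSubring n R)) =
      {M : upperTriangularSubring n R |
        ∀ i j : Fin n, i ≤ j → (M : Matrix (Fin n) (Fin n) R) i j ∈ J i j}) :
    IsZoIdeal I ↔
      (∀ i : Fin n, IsZoIdeal (J i i)) ∧ (∀ i j : Fin n, i < j → J i j = ⊤) := by
  have mem_I (M : upperTriangularSubring n R) :
      M ∈ I ↔ ∀ i j : Fin n, i ≤ j → (M : Matrix (Fin n) (Fin n) R) i j ∈ J i j :=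
    Set.ext_iff.1 hI M
  have single_mem_I (i j : Fin n) (hij : i ≤ j) (r : R) :
      single i j hij r ∈ I ↔ r ∈ J i j := by
    refine (mem_I _).trans ⟨fun h => by simpa using h i j hij, fun hr k l _ => ?_⟩
    by_cases hkl : i = k ∧ j = l
    · obtain ⟨rfl, rfl⟩ := hkl
      simpa using hr
    · simp [Matrix.single_apply_of_ne _ _ _ _ _ hkl]
  constructor
  · intro hZo
    refine ⟨fun i a ha x hx => ?_, fun i j hij => eq_top _ ?_⟩
    · rw [← single_mem_I i i le_rfl] at ha
      rw [SetLike.mem_coe, ← single_mem_I i i le_rfl]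
      refine hZo _ ha (mem_Pa_iff_diag.2 fun k => ?_)
      by_cases hk : i = k
      · subst hk
        simpa using hx
      · simpa [hk] using zero_mem_Pa _
    · refine (single_mem_I i j hij.le 1).1 (hZo 0 I.zero_mem (mem_Pa_iff_diag.2 fun k => ?_))
      have hk : ¬(i = k ∧ j = k) := fun h => hij.ne (h.1.trans h.2.symm)
      simpa [Matrix.single_apply_of_ne _ _ _ _ _ hk] using zero_mem_Pa _
  · rintro ⟨hdiag, hoff⟩ A hA X hX
    rw [mem_I] at hA
    rw [SetLike.mem_coe, mem_I]
    intro i j hij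
    obtain hlt | rfl := hij.lt_or_eq
    · simp [hoff i j hlt]
    · exact hdiag i _ (hA i i le_rfl) (mem_Pa_iff_diag.1 hX i)

/-- Theorem 4.5: the ideal of `Tₙ(R)` determined by the ideals `J i j` (`i ≤ j`) is a
z°-ideal iff each diagonal `J i i` is a z°-ideal of `R` and `J i j = R` for `i < j`. -/
theorem stmt8 (R : Type*) [Ring R] (n : ℕ) (hn : 0 < n)
    (J : Fin n → Fin n → TwoSidedIdeal R)
    (hrow : ∀ i j k : Fin n, i ≤ j → j ≤ k → J i j ≤ J i k)
    (hcol : ∀ i j k : Fin n, i ≤ j → j ≤ k → J j k ≤ J i k)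
    (I : TwoSidedIdeal (upperTriangularSubring n R))
    (hI : (I : Set (upperTriangularSubring n R)) =
      {M : upperTriangularSubring n R |
        ∀ i j : Fin n, i ≤ j → (M : Matrix (Fin n) (Fin n) R) i j ∈ J i j}) :
    IsZoIdeal I ↔
      (∀ i : Fin n, IsZoIdeal (J i i)) ∧ (∀ i j : Fin n, i < j → J i j = ⊤) :=
  stmt8_general R n J I hI
end

section
/- Let R be a ring. The following are equivalent: (1) R is semiprime; (2) for every two ideals I, J of R, l(IJ) = l(I ∩ J); (3) for every two ideals I, J of R, r(l(IJ)) = r(l(I ∩ J)) = r(l(I)) ∩ r(l(J)). -/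
open TwoSidedIdeal

/-- The set of products `{ab : a ∈ I, b ∈ J}`. -/
def mulSet {R : Type*} [Ring R] (I J : Set R) : Set R := {x | ∃ a ∈ I, ∃ b ∈ J, x = a * b}

/-- The product `IJ` of two two-sided ideals: the ideal generated by products `ab`,
`a ∈ I`, `b ∈ J`. -/
def prodIdeal {R : Type*} [Ring R] (I J : TwoSidedIdeal R) : TwoSidedIdeal R :=
  span (mulSet (I : Set R) (J : Set R))

/-!
In a semiprime ring `aRb = 0` forces `bRa = 0`, since `(bra)s(bra) = br(asb)ra`. This lets one
rotate the factors of a vanishing product of ideals: from `y(I ∩ J) = 0`, and hence `yIJ = 0`,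
one passes successively to `yI·r(l(J)) = 0`, to `r(l(J))·y·I = 0`, and to
`y·r(l(I))·r(l(J)) = 0`.
Together with `l(AB) = l(A ∩ B)` for the ideals `A = r(l(I))`, `B = r(l(J))` this gives
`r(l(I)) ∩ r(l(J)) ⊆ r(l(I ∩ J))`. Conversely, if `I² = 0` then `l(I·I) = R`, so either
condition forces `r(l(I)) = 0`, and `I ⊆ r(l(I))`.
-/

section Annihilators

variable {R : Type*} [Ring R]

lemma lAnn_anti {S T : Set R} (h : S ⊆ T) : lAnn R T ⊆ lAnn R S :=
  fun _ hx s hs => hx s (h hs)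

lemma subset_rAnn_lAnn (S : Set R) : S ⊆ rAnn R (lAnn R S) :=
  fun s hs _ hx => hx s hs

lemma rAnn_lAnn_mono {S T : Set R} (h : S ⊆ T) : rAnn R (lAnn R S) ⊆ rAnn R (lAnn R T) :=
  rAnn_anti (lAnn_anti h)

def lAnnIdeal (S : Set R) (hS : ∀ r, ∀ s ∈ S, r * s ∈ S) : TwoSidedIdeal R :=
  .mk' (lAnn R S) (fun _ _ => zero_mul _)
    (fun hx hy s hs => by rw [add_mul, hx s hs, hy s hs, add_zero])
    (fun hx s hs => by rw [neg_mul, hx s hs, neg_zero])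
    (fun {t _} hx s hs => by rw [mul_assoc, hx s hs, mul_zero])
    (fun {_ t} hx s hs => by rw [mul_assoc, hx _ (hS t s hs)])

def rAnnIdeal (S : Set R) (hS : ∀ s ∈ S, ∀ r, s * r ∈ S) : TwoSidedIdeal R :=
  .mk' (rAnn R S) (fun _ _ => mul_zero _)
    (fun hx hy s hs => by rw [mul_add, hx s hs, hy s hs, add_zero])
    (fun hx s hs => by rw [mul_neg, hx s hs, neg_zero])
    (fun {t _} hx s hs => by rw [← mul_assoc, hx _ (hS s hs t)])
    (fun {_ t} hx s hs => by rw [← mul_assoc, hx s hs, zero_mul])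

@[simp]
lemma mem_lAnnIdeal {S : Set R} {hS : ∀ r, ∀ s ∈ S, r * s ∈ S} {x : R} :
    x ∈ lAnnIdeal S hS ↔ x ∈ lAnn R S :=
  TwoSidedIdeal.mem_mk' ..

@[simp]
lemma mem_rAnnIdeal {S : Set R} {hS : ∀ s ∈ S, ∀ r, s * r ∈ S} {x : R} :
    x ∈ rAnnIdeal S hS ↔ x ∈ rAnn R S :=
  TwoSidedIdeal.mem_mk' ..

lemma lAnn_mul_mem (S : Set R) (hS : ∀ r, ∀ s ∈ S, r * s ∈ S) :
    ∀ x ∈ lAnn R S, ∀ r, x * r ∈ lAnn R S :=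
  fun x hx r s hs => by rw [mul_assoc, hx _ (hS r s hs)]

def TwoSidedIdeal.rAnnLAnn (I : TwoSidedIdeal R) : TwoSidedIdeal R :=
  rAnnIdeal (lAnn R I) (lAnn_mul_mem I fun r s hs => I.mul_mem_left r s hs)

lemma TwoSidedIdeal.mem_rAnnLAnn {I : TwoSidedIdeal R} {x : R} :
    x ∈ I.rAnnLAnn ↔ x ∈ rAnn R (lAnn R I) :=
  mem_rAnnIdeal

lemma lAnn_span_of_mul_mem {S : Set R} (hS : ∀ r, ∀ s ∈ S, r * s ∈ S) :
    lAnn R (span S) = lAnn R S := by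
  refine (lAnn_anti subset_span).antisymm fun y hy s hs => ?_
  have hle : span S ≤ rAnnIdeal (lAnn R S) (lAnn_mul_mem S hS) := by
    rw [span_le]
    exact fun s hs => mem_rAnnIdeal.mpr (subset_rAnn_lAnn S hs)
  exact mem_rAnnIdeal.mp (hle hs) y hy

lemma mem_lAnn_prodIdeal {I J : TwoSidedIdeal R} {y : R} :
    y ∈ lAnn R (prodIdeal I J) ↔ ∀ a ∈ I, ∀ b ∈ J, y * (a * b) = 0 := by
  have hmul : ∀ r, ∀ s ∈ mulSet (I : Set R) J, r * s ∈ mulSet (I : Set R) J := by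
    rintro r _ ⟨a, ha, b, hb, rfl⟩
    exact ⟨r * a, I.mul_mem_left r a ha, b, hb, (mul_assoc r a b).symm⟩
  rw [prodIdeal, lAnn_span_of_mul_mem hmul]
  exact ⟨fun hy a ha b hb => hy _ ⟨a, ha, b, hb, rfl⟩,
    fun hy _ ⟨a, ha, b, hb, hs⟩ => hs ▸ hy a ha b hb⟩

lemma prodIdeal_le_inf (I J : TwoSidedIdeal R) : prodIdeal I J ≤ I ⊓ J := by
  rw [prodIdeal, span_le]
  rintro _ ⟨a, ha, b, hb, rfl⟩
  exact (mem_inf R).mpr ⟨I.mul_mem_right a b ha, J.mul_mem_left a b hb⟩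

namespace IsSemiprimeRing

lemma eq_zero_of_mul_mul_self_eq_zero (h : IsSemiprimeRing R) {c : R}
    (hc : ∀ r, c * r * c = 0) : c = 0 := by
  have hleft : span {c} ≤ lAnnIdeal (Set.range (· * c)) (by
      rintro r _ ⟨s, rfl⟩
      exact ⟨r * s, mul_assoc r s c⟩) := by
    rw [span_le, Set.singleton_subset_iff, SetLike.mem_coe, mem_lAnnIdeal]
    rintro _ ⟨r, rfl⟩
    rw [← mul_assoc, hc]
  have hsq : ∀ a ∈ span {c}, ∀ b ∈ span {c}, a * b = 0 := by
    intro a ha b hb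
    have hright : span {c} ≤ rAnnIdeal (Set.range (a * ·)) (by
        rintro _ ⟨s, rfl⟩ r
        exact ⟨s * r, (mul_assoc a s r).symm⟩) := by
      rw [span_le, Set.singleton_subset_iff, SetLike.mem_coe, mem_rAnnIdeal]
      rintro _ ⟨r, rfl⟩
      rw [mul_assoc]
      exact mem_lAnnIdeal.mp (hleft ha) _ ⟨r, rfl⟩
    simpa using mem_rAnnIdeal.mp (hright hb) _ ⟨1, rfl⟩
  have hc : c ∈ span {c} := subset_span rfl
  rwa [h _ hsq, mem_bot R] at hc

lemma mul_mul_eq_zero_comm (h : IsSemiprimeRing R) {a b : R}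
    (hab : ∀ r, a * r * b = 0) (r : R) : b * r * a = 0 :=
  h.eq_zero_of_mul_mul_self_eq_zero fun s => by
    calc b * r * a * s * (b * r * a) = b * r * (a * s * b) * r * a := by noncomm_ring
      _ = 0 := by rw [hab, mul_zero, zero_mul, zero_mul]

lemma lAnn_prodIdeal (h : IsSemiprimeRing R) (I J : TwoSidedIdeal R) :
    lAnn R (prodIdeal I J) = lAnn R (I ⊓ J : TwoSidedIdeal R) := by
  refine Set.Subset.antisymm (fun x hx a ha => ?_) (lAnn_anti (prodIdeal_le_inf I J))
  obtain ⟨haI, haJ⟩ := (mem_inf R).mp ha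
  refine h.eq_zero_of_mul_mul_self_eq_zero fun r => ?_
  calc x * a * r * (x * a) = x * (a * (r * x * a)) := by noncomm_ring
    _ = 0 := mem_lAnn_prodIdeal.mp hx a haI _ (J.mul_mem_left _ a haJ)

lemma mul_mul_eq_zero_of_mem_lAnn_inf (h : IsSemiprimeRing R) {I J : TwoSidedIdeal R} {y a b : R}
    (hy : y ∈ lAnn R (I ⊓ J : TwoSidedIdeal R)) (ha : a ∈ rAnn R (lAnn R I))
    (hb : b ∈ rAnn R (lAnn R J)) : y * (a * b) = 0 := by
  have hyub : ∀ u ∈ I, ∀ r, y * u * r * b = 0 := fun u hu r => by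
    refine hb _ fun j hj => ?_
    simpa only [mul_assoc] using hy (u * r * j) ((mem_inf R).mpr
      ⟨I.mul_mem_right _ _ (I.mul_mem_right u r hu), J.mul_mem_left _ j hj⟩)
  have hbry : ∀ r, b * r * y ∈ lAnn R I := fun r u hu => by
    rw [mul_assoc]
    exact h.mul_mul_eq_zero_comm (hyub u hu) r
  have hbrya : ∀ r, b * r * (y * a) = 0 := fun r => by
    rw [← mul_assoc]
    exact ha _ (hbry r)
  simpa [mul_assoc] using h.mul_mul_eq_zero_comm hbrya 1

lemma rAnn_lAnn_inf (h : IsSemiprimeRing R) (I J : TwoSidedIdeal R) :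
    rAnn R (lAnn R (I ⊓ J : TwoSidedIdeal R)) = rAnn R (lAnn R I) ∩ rAnn R (lAnn R J) := by
  refine Set.Subset.antisymm (Set.subset_inter (rAnn_lAnn_mono fun _ hx => ((mem_inf R).mp hx).1)
    (rAnn_lAnn_mono fun _ hx => ((mem_inf R).mp hx).2)) fun x ⟨hxI, hxJ⟩ y hy => ?_
  have hyAB : y ∈ lAnn R (prodIdeal I.rAnnLAnn J.rAnnLAnn) :=
    mem_lAnn_prodIdeal.mpr fun a ha b hb => h.mul_mul_eq_zero_of_mem_lAnn_inf hy
      (mem_rAnnLAnn.mp ha) (mem_rAnnLAnn.mp hb)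
  rw [h.lAnn_prodIdeal] at hyAB
  exact hyAB x ((mem_inf R).mpr ⟨mem_rAnnLAnn.mpr hxI, mem_rAnnLAnn.mpr hxJ⟩)

end IsSemiprimeRing

lemma rAnn_lAnn_prodIdeal_self {I : TwoSidedIdeal R} (hI : ∀ a ∈ I, ∀ b ∈ I, a * b = 0) :
    rAnn R (lAnn R (prodIdeal I I)) = {0} := by
  have hl : lAnn R (prodIdeal I I) = Set.univ :=
    Set.eq_univ_of_forall fun _ => mem_lAnn_prodIdeal.mpr fun a ha b hb => by
      rw [hI a ha b hb, mul_zero]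
  ext x
  rw [hl]
  exact ⟨fun hx => by simpa using hx 1 trivial, fun hx s _ => by rw [hx, mul_zero]⟩

lemma TwoSidedIdeal.eq_bot_of_rAnn_lAnn_eq_zero {I : TwoSidedIdeal R}
    (h : rAnn R (lAnn R I) = {0}) : I = ⊥ :=
  eq_bot_iff.mpr fun _ ha => (mem_bot R).mpr (h ▸ subset_rAnn_lAnn (I : Set R) ha :)

end Annihilators

/-- Lemma 5.1: `R` is semiprime iff `l(IJ) = l(I ∩ J)` for all ideals `I, J`, iff
`r(l(IJ)) = r(l(I ∩ J)) = r(l(I)) ∩ r(l(J))` for all ideals `I, J`. -/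
theorem stmt11 (R : Type*) [Ring R] :
    List.TFAE [
      IsSemiprimeRing R,
      ∀ I J : TwoSidedIdeal R,
        lAnn R (prodIdeal I J : Set R) = lAnn R ((I ⊓ J : TwoSidedIdeal R) : Set R),
      ∀ I J : TwoSidedIdeal R,
        rAnn R (lAnn R (prodIdeal I J : Set R)) =
            rAnn R (lAnn R ((I ⊓ J : TwoSidedIdeal R) : Set R)) ∧
          rAnn R (lAnn R ((I ⊓ J : TwoSidedIdeal R) : Set R)) =
            rAnn R (lAnn R (I : Set R)) ∩ rAnn R (lAnn R (J : Set R)) ] := by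
  tfae_have 1 → 2 := IsSemiprimeRing.lAnn_prodIdeal
  tfae_have 1 → 3 := fun h I J => ⟨by rw [h.lAnn_prodIdeal], h.rAnn_lAnn_inf I J⟩
  tfae_have 2 → 1 := fun h2 I hI => TwoSidedIdeal.eq_bot_of_rAnn_lAnn_eq_zero <| by
    rw [← rAnn_lAnn_prodIdeal_self hI, h2, inf_idem]
  tfae_have 3 → 1 := fun h3 I hI => TwoSidedIdeal.eq_bot_of_rAnn_lAnn_eq_zero <| by
    rw [← rAnn_lAnn_prodIdeal_self hI, (h3 I I).1, inf_idem]
  tfae_finish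
end

section
/- Let R be a semiprime ring. Then R is reduced if and only if for all a, b ∈ R, l(RaRbR) = l(RabR), where RaRbR denotes the product of the ideals RaR and RbR, and RabR is the ideal generated by ab. -/
open TwoSidedIdeal

section Aux
variable {R : Type*} [Ring R]

lemma myflip [IsReduced R] {x y : R} (h : x * y = 0) : y * x = 0 := by
  have h2 : (y * x) ^ 2 = 0 := by
    rw [sq, show y * x * (y * x) = y * (x * y) * x by simp [mul_assoc], h, mul_zero, zero_mul]
  exact IsReduced.eq_zero _ ⟨2, h2⟩

lemma mymid [IsReduced R] {x y : R} (h : x * y = 0) (r : R) : x * r * y = 0 := by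
  have h2 : (x * r * y) ^ 2 = 0 := by
    rw [sq, show x * r * y * (x * r * y) = x * r * (y * x) * r * y by simp [mul_assoc],
      myflip h]
    simp
  exact IsReduced.eq_zero _ ⟨2, h2⟩

/-- In a reduced ring, the right annihilator of an element is a two-sided ideal. -/
def rIdeal [IsReduced R] (x : R) : TwoSidedIdeal R :=
  mk' {y | x * y = 0} (by simp)
    (fun {a b} ha hb => by simp only [Set.mem_setOf_eq] at *; rw [mul_add, ha, hb, add_zero])
    (fun {a} ha => by simp only [Set.mem_setOf_eq] at *; rw [mul_neg, ha, neg_zero])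
    (fun {r a} ha => by
      simp only [Set.mem_setOf_eq] at *
      rw [← mul_assoc]; exact mymid ha r)
    (fun {a r} ha => by simp only [Set.mem_setOf_eq] at *; rw [← mul_assoc, ha, zero_mul])

lemma mem_rIdeal [IsReduced R] {x y : R} : y ∈ rIdeal x ↔ x * y = 0 := mem_mk' _ _ _ _ _ _ _

lemma sq_zero_reduced (h : ∀ c : R, c * c = 0 → c = 0) : IsReduced R := by
  constructor
  intro x ⟨n, hn⟩
  induction n using Nat.strong_induction_on generalizing x with
  | _ n ih =>
    match n with
    | 0 =>
      rw [pow_zero] at hn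
      calc x = x * 1 := (mul_one x).symm
        _ = 0 := by rw [hn, mul_zero]
    | 1 => rwa [pow_one] at hn
    | (n + 2) =>
      have h1 : x ^ (n + 1) * x ^ (n + 1) = 0 := by
        rw [← pow_add]
        have : n + 1 + (n + 1) = n + (n + 2) := by omega
        rw [this, pow_add, hn, mul_zero]
      exact ih (n + 1) (by omega) x (h _ h1)

end Aux

/-- Lemma 5.5: a semiprime ring `R` is reduced iff `l(RaRbR) = l(RabR)` for all
`a, b ∈ R`, where `RaRbR` is the product of the ideals `RaR` and `RbR`. -/
theorem stmt15 (R : Type*) [Ring R] (hR : IsSemiprimeRing R) :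
    IsReduced R ↔
      ∀ a b : R,
        lAnn R ((span {x : R | ∃ u ∈ (span {a} : TwoSidedIdeal R),
            ∃ v ∈ (span {b} : TwoSidedIdeal R), x = u * v} : TwoSidedIdeal R) : Set R) =
          lAnn R ((span {a * b} : TwoSidedIdeal R) : Set R) := by
  unfold IsSemiprimeRing at hR
  unfold lAnn
  constructor
  · intro hred a b
    ext x
    simp only [Set.mem_setOf_eq]
    constructor
    · intro h s hs
      refine h s ?_
      exact mem_span_iff.mp hs _ (Set.singleton_subset_iff.mpr
        (subset_span ⟨a, subset_span rfl, b, subset_span rfl, rfl⟩))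
    · intro h s hs
      have hab : x * (a * b) = 0 := h _ (subset_span rfl)
      -- show the generating set is inside rIdeal x
      have key : {y : R | ∃ u ∈ (span {a} : TwoSidedIdeal R),
          ∃ v ∈ (span {b} : TwoSidedIdeal R), y = u * v} ⊆ (rIdeal x : Set R) := by
        rintro _ ⟨u, hu, v, hv, rfl⟩
        rw [SetLike.mem_coe, mem_rIdeal]
        -- step 1 : x * a * v = 0 for all v ∈ span {b}
        have hv0 : x * a * v = 0 := by
          have : v ∈ rIdeal (x * a) := mem_span_iff.mp hv _ (Set.singleton_subset_iff.mpr
            (by rw [SetLike.mem_coe, mem_rIdeal, mul_assoc]; exact hab))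
          exact mem_rIdeal.mp this
        -- step 2 : u * (v * x) = 0 for all u ∈ span {a}
        have ha' : v * x * a = 0 := by
          have h1 : x * (a * v) = 0 := by rw [← mul_assoc]; exact hv0
          have h2 : a * v * x = 0 := myflip h1
          have h3 : a * (v * x) = 0 := by rw [← mul_assoc]; exact h2
          exact myflip h3
        have hu0 : v * x * u = 0 := by
          have : u ∈ rIdeal (v * x) := mem_span_iff.mp hu _ (Set.singleton_subset_iff.mpr
            (by rw [SetLike.mem_coe, mem_rIdeal]; exact ha'))
          exact mem_rIdeal.mp this
        have : u * (v * x) = 0 := myflip hu0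
        have huv : u * v * x = 0 := by rw [mul_assoc]; exact this
        exact myflip huv
      have : s ∈ rIdeal x := mem_span_iff.mp hs _ key
      exact mem_rIdeal.mp this
  · intro h
    apply sq_zero_reduced
    intro c hcc
    have h1 : (1 : R) ∈ {x : R | ∀ s ∈ ((span {c * c} : TwoSidedIdeal R) : Set R), x * s = 0} := by
      intro s hs
      rw [hcc] at hs
      have : s ∈ (⊥ : TwoSidedIdeal R) :=
        mem_span_iff.mp hs ⊥ (Set.singleton_subset_iff.mpr (by simp [mem_bot]))
      rw [mem_bot] at this
      rw [this, mul_zero]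
    rw [← h c c] at h1
    have hsq : ∀ u ∈ (span {c} : TwoSidedIdeal R), ∀ v ∈ (span {c} : TwoSidedIdeal R), u * v = 0 := by
      intro u hu v hv
      have := h1 (u * v) (subset_span ⟨u, hu, v, hv, rfl⟩)
      rwa [one_mul] at this
    have : (span {c} : TwoSidedIdeal R) = ⊥ := hR _ hsq
    have hc : c ∈ (⊥ : TwoSidedIdeal R) := this ▸ subset_span rfl
    rwa [mem_bot] at hc
end
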